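/- arXiv:1107.0397 — 2 statements merged into one kernel-verified Lean document; each statement's English description precedes it below -/
import Mathlib

section
/- Let H be a real Hilbert space, ι an index type, and (ψ_k)_{k ∈ ι} a Hilbert basis of H. Let A : H →L[ℝ] H be a continuous linear symmetric operator (⟪A x, y⟫ = ⟪x, A y⟫ for all x, y) such that A ψ_k = μ_k • ψ_k with μ_k ∈ ℝ. Let λ ≥ 0 be real and let δ > 0 satisfy δ ≤ |μ_k − λ| for every k ∈ ι. Suppose φ, v, w ∈ H satisfy φ = v + w and A w − λ • w = λ • v. Then ‖φ‖ ≤ (1 + λ/δ) · ‖v‖. -/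
/-!
In the eigenbasis `b` of `A`, the equation `(A - λ) w = λ v` reads
`(μ k - λ) ⟪b k, w⟫ = λ ⟪b k, v⟫`, so the spectral gap bounds every coefficient of `w` by
`λ / δ` times the corresponding coefficient of `v`. By Parseval `‖w‖ ≤ (λ / δ) ‖v‖`,
and the triangle inequality for `φ = v + w` concludes.
-/

open scoped InnerProductSpace RealInnerProductSpace

theorem HilbertBasis.norm_le_mul_norm_of_forall_inner_le {ι 𝕜 E : Type*} [RCLike 𝕜]
    [NormedAddCommGroup E] [InnerProductSpace 𝕜 E] (b : HilbertBasis ι 𝕜 E) {x y : E}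
    {c : ℝ} (hc : 0 ≤ c) (h : ∀ i, ‖⟪b i, x⟫_𝕜‖ ≤ c * ‖⟪b i, y⟫_𝕜‖) :
    ‖x‖ ≤ c * ‖y‖ := by
  have hrepr : ‖b.repr x‖ ≤ ‖c • b.repr y‖ := lp.norm_mono two_ne_zero fun i => by
    simpa [norm_smul, abs_of_nonneg hc, b.repr_apply_apply] using h i
  simpa [norm_smul, abs_of_nonneg hc] using hrepr

theorem LinearMap.IsSymmetric.inner_apply_eq_of_apply_eq_smul {E : Type*}
    [NormedAddCommGroup E] [InnerProductSpace ℝ E] {T : E →ₗ[ℝ] E} (hT : T.IsSymmetric)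
    {e : E} {μ : ℝ} (he : T e = μ • e) (x : E) : ⟪e, T x⟫ = μ * ⟪e, x⟫ := by
  rw [← hT, he, real_inner_smul_left]

theorem abs_le_div_mul_abs_of_mul_eq {d lam a c δ : ℝ} (hlam : 0 ≤ lam) (hδ : 0 < δ)
    (hgap : δ ≤ |d|) (h : d * a = lam * c) : |a| ≤ lam / δ * |c| := by
  rw [div_mul_eq_mul_div, le_div_iff₀ hδ]
  calc |a| * δ ≤ |a| * |d| := by gcongr
    _ = lam * |c| := by rw [mul_comm, ← abs_mul, h, abs_mul, abs_of_nonneg hlam]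

theorem mode_expulsion_bound_general {H : Type*} [NormedAddCommGroup H]
    [InnerProductSpace ℝ H] {ι : Type*}
    (b : HilbertBasis ι ℝ H) (A : H →L[ℝ] H)
    (hA : ∀ x y : H, ⟪A x, y⟫ = ⟪x, A y⟫)
    (μ : ι → ℝ) (hb : ∀ k, A (b k) = μ k • b k)
    (lam : ℝ) (hlam : 0 ≤ lam) (δ : ℝ) (hδ : 0 < δ)
    (hgap : ∀ k, δ ≤ |μ k - lam|)
    (φ v w : H) (hφ : φ = v + w) (hw : A w - lam • w = lam • v) :
    ‖φ‖ ≤ (1 + lam / δ) * ‖v‖ := by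
  have hsymm : (A : H →ₗ[ℝ] H).IsSymmetric := hA
  have hcoef (k : ι) : (μ k - lam) * ⟪b k, w⟫ = lam * ⟪b k, v⟫ := by
    have hk : ⟪b k, A w⟫ - lam * ⟪b k, w⟫ = lam * ⟪b k, v⟫ := by
      simpa only [inner_sub_right, real_inner_smul_right] using congrArg (⟪b k, ·⟫) hw
    have hAw : ⟪b k, A w⟫ = μ k * ⟪b k, w⟫ :=
      hsymm.inner_apply_eq_of_apply_eq_smul (hb k) w
    linarith
  have hwv : ‖w‖ ≤ lam / δ * ‖v‖ :=
    b.norm_le_mul_norm_of_forall_inner_le (by positivity) fun k =>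
      abs_le_div_mul_abs_of_mul_eq hlam hδ (hgap k) (hcoef k)
  calc ‖φ‖ ≤ ‖v‖ + ‖w‖ := hφ ▸ norm_add_le v w
    _ ≤ (1 + lam / δ) * ‖v‖ := by linarith

/-- Main estimate of Proposition 2: a mode `φ = v + w` with `(A − λ)w = λ v`
satisfies `‖φ‖ ≤ (1 + λ/δ) ‖v‖` when `λ` is at distance at least `δ > 0` from
the spectrum of `A`. -/
theorem mode_expulsion_bound {H : Type*} [NormedAddCommGroup H]
    [InnerProductSpace ℝ H] [CompleteSpace H] {ι : Type*}
    (b : HilbertBasis ι ℝ H) (A : H →L[ℝ] H)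
    (hA : ∀ x y : H, ⟪A x, y⟫ = ⟪x, A y⟫)
    (μ : ι → ℝ) (hb : ∀ k, A (b k) = μ k • b k)
    (lam : ℝ) (hlam : 0 ≤ lam) (δ : ℝ) (hδ : 0 < δ)
    (hgap : ∀ k, δ ≤ |μ k - lam|)
    (φ v w : H) (hφ : φ = v + w) (hw : A w - lam • w = lam • v) :
    ‖φ‖ ≤ (1 + lam / δ) * ‖v‖ :=
  mode_expulsion_bound_general b A hA μ hb lam hlam δ hδ hgap φ v w hφ hw
end

section
/- Let H be a real Hilbert space, ι a nonempty index type, and (ψ_k)_{k ∈ ι} a Hilbert basis of H. Let A : H →L[ℝ] H be a continuous linear symmetric operator (⟪A x, y⟫ = ⟪x, A y⟫ for all x, y) such that A ψ_k = μ_k • ψ_k with μ_k ∈ ℝ. Let λ ≥ 0 be real and suppose φ, v, w ∈ H satisfy φ = v + w, A w − λ • w = λ • v, and ‖φ‖ > ‖v‖. Then the infimum ⨅_{k ∈ ι} |μ_k − λ| satisfies ⨅_{k ∈ ι} |μ_k − λ| ≤ λ · ‖v‖ / (‖φ‖ − ‖v‖). -/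
/-!
In the eigenbasis `b`, the operator `A - λ` multiplies the `k`-th coordinate of `w` by `μ k - λ`,
so by Parseval `‖(A - λ) w‖ ≥ d ‖w‖` with `d = ⨅ k, |μ k - λ|`. Since `‖(A - λ) w‖ = λ ‖v‖` and
`‖w‖ ≥ ‖φ‖ - ‖v‖` by the triangle inequality, `d (‖φ‖ - ‖v‖) ≤ λ ‖v‖`.
-/

open scoped RealInnerProductSpace

section

variable {𝕜 E ι : Type*} [RCLike 𝕜] [NormedAddCommGroup E] [InnerProductSpace 𝕜 E]

theorem LinearMap.IsSymmetric.inner_sub_smul_of_apply_eq_smul {T : E →ₗ[𝕜] E}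
    (hT : T.IsSymmetric) {u : E} {m : ℝ} (hu : T u = (m : 𝕜) • u) (c : 𝕜) (w : E) :
    inner 𝕜 u (T w - c • w) = ((m : 𝕜) - c) * inner 𝕜 u w := by
  rw [inner_sub_right, inner_smul_right, ← hT, hu, inner_smul_left, RCLike.conj_ofReal,
    sub_mul]

namespace HilbertBasis

theorem mul_norm_le_norm_sub_smul_of_isSymmetric (b : HilbertBasis ι 𝕜 E) {T : E →ₗ[𝕜] E}
    (hT : T.IsSymmetric) {μ : ι → ℝ} (hμ : ∀ k, T (b k) = (μ k : 𝕜) • b k) {c : 𝕜}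
    {d : ℝ} (hd : 0 ≤ d) (hdμ : ∀ k, d ≤ ‖(μ k : 𝕜) - c‖) (w : E) :
    d * ‖w‖ ≤ ‖T w - c • w‖ := by
  rw [← b.repr.norm_map w, ← b.repr.norm_map, ← Real.norm_of_nonneg hd,
    ← lp.norm_const_smul two_ne_zero]
  refine lp.norm_mono two_ne_zero fun k => ?_
  rw [lp.coeFn_smul, Pi.smul_apply, b.repr_apply_apply, b.repr_apply_apply,
    hT.inner_sub_smul_of_apply_eq_smul (hμ k), norm_smul, norm_mul, Real.norm_of_nonneg hd]
  exact mul_le_mul_of_nonneg_right (hdμ k) (norm_nonneg _)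

theorem iInf_abs_sub_mul_norm_le_of_isSymmetric (b : HilbertBasis ι 𝕜 E) {T : E →ₗ[𝕜] E}
    (hT : T.IsSymmetric) {μ : ι → ℝ} (hμ : ∀ k, T (b k) = (μ k : 𝕜) • b k) (c : ℝ)
    (w : E) :
    (⨅ k, |μ k - c|) * ‖w‖ ≤ ‖T w - (c : 𝕜) • w‖ := by
  refine b.mul_norm_le_norm_sub_smul_of_isSymmetric hT hμ
    (Real.iInf_nonneg fun k => abs_nonneg _) (fun k => ?_) w
  rw [← RCLike.ofReal_sub, RCLike.norm_ofReal]
  exact ciInf_le ⟨0, by rintro _ ⟨j, rfl⟩; exact abs_nonneg _⟩ k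

end HilbertBasis

end

theorem spectrum_proximity_of_localization_general {H : Type*} [NormedAddCommGroup H]
    [InnerProductSpace ℝ H] {ι : Type*}
    (b : HilbertBasis ι ℝ H) (A : H →L[ℝ] H)
    (hA : ∀ x y : H, ⟪A x, y⟫ = ⟪x, A y⟫)
    (μ : ι → ℝ) (hb : ∀ k, A (b k) = μ k • b k)
    (lam : ℝ) (hlam : 0 ≤ lam)
    (φ v w : H) (hφ : φ = v + w) (hw : A w - lam • w = lam • v)
    (hbig : ‖v‖ < ‖φ‖) :
    ⨅ k, |μ k - lam| ≤ lam * ‖v‖ / (‖φ‖ - ‖v‖) := by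
  have hdist : (⨅ k, |μ k - lam|) * ‖w‖ ≤ lam * ‖v‖ := by
    simpa [hw, norm_smul, abs_of_nonneg hlam] using
      b.iInf_abs_sub_mul_norm_le_of_isSymmetric (T := (A : H →ₗ[ℝ] H)) hA hb lam w
  have hw_large : ‖φ‖ - ‖v‖ ≤ ‖w‖ := by
    rw [hφ, sub_le_iff_le_add']
    exact norm_add_le v w
  rw [le_div_iff₀ (sub_pos.2 hbig)]
  calc (⨅ k, |μ k - lam|) * (‖φ‖ - ‖v‖)
      ≤ (⨅ k, |μ k - lam|) * ‖w‖ := by gcongr; exact Real.iInf_nonneg fun k => abs_nonneg _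
    _ ≤ lam * ‖v‖ := hdist

/-- Contrapositive form of Proposition 2: if the mode `φ = v + w`, with
`(A − λ)w = λ v`, has norm exceeding `‖v‖`, then the distance from `λ` to the
spectrum `{μ_k}` is at most `λ ‖v‖ / (‖φ‖ − ‖v‖)`. -/
theorem spectrum_proximity_of_localization {H : Type*} [NormedAddCommGroup H]
    [InnerProductSpace ℝ H] [CompleteSpace H] {ι : Type*} [Nonempty ι]
    (b : HilbertBasis ι ℝ H) (A : H →L[ℝ] H)
    (hA : ∀ x y : H, ⟪A x, y⟫ = ⟪x, A y⟫)
    (μ : ι → ℝ) (hb : ∀ k, A (b k) = μ k • b k)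
    (lam : ℝ) (hlam : 0 ≤ lam)
    (φ v w : H) (hφ : φ = v + w) (hw : A w - lam • w = lam • v)
    (hbig : ‖v‖ < ‖φ‖) :
    ⨅ k, |μ k - lam| ≤ lam * ‖v‖ / (‖φ‖ - ‖v‖) :=
  spectrum_proximity_of_localization_general b A hA μ hb lam hlam φ v w hφ hw hbig
end
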